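/- arXiv:0907.3332 — 2 statements merged into one kernel-verified Lean document; each statement's English description precedes it below -/
import Mathlib

section
/- Let F ⊆ G be lattice filters of an MV-algebra L. Then F ⊸ G = G⁺ ⊸ F⁺, where for a lattice filter H, H⁺ = {z ∈ L | ¬z ∉ H} (note G⁺ ⊆ F⁺ when F ⊆ G). -/
/-- An MV-algebra: a commutative monoid `(L, ⊕, 0)` with a unary `¬` satisfying
`¬¬x = x`, `x ⊕ ¬0 = ¬0` and `¬(¬x ⊕ y) ⊕ y = ¬(¬y ⊕ x) ⊕ x`. -/
class MV (L : Type*) where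
  add : L → L → L
  zero : L
  neg : L → L
  add_assoc : ∀ x y z : L, add (add x y) z = add x (add y z)
  add_comm : ∀ x y : L, add x y = add y x
  add_zero : ∀ x : L, add x zero = x
  neg_neg : ∀ x : L, neg (neg x) = x
  add_neg_zero : ∀ x : L, add x (neg zero) = neg zero
  luk : ∀ x y : L, add (neg (add (neg x) y)) y = add (neg (add (neg y) x)) x

namespace MV

variable {L : Type*} [MV L]

/-- `1 = ¬0`. -/
def one : L := neg zero

/-- `x → y = ¬x ⊕ y`. -/
def imp (x y : L) : L := add (neg x) y

/-- `x ⊗ y = ¬(¬x ⊕ ¬y)`. -/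
def otimes (x y : L) : L := neg (add (neg x) (neg y))

/-- `x ∨ y = (x → y) → y`. -/
def join (x y : L) : L := imp (imp x y) y

/-- `x ∧ y = ¬(¬x ∨ ¬y)`. -/
def meet (x y : L) : L := neg (join (neg x) (neg y))

/-- `x ≤ y` iff `x → y = 1`. -/
def le (x y : L) : Prop := imp x y = one

/-- `x < y` iff `x ≤ y` and `x ≠ y`. -/
def lt (x y : L) : Prop := le x y ∧ x ≠ y

/-- A lattice filter: nonempty, upward closed, closed under `∧`. -/
def IsLatticeFilter (F : Set L) : Prop :=
  F.Nonempty ∧ (∀ x y : L, x ∈ F → le x y → y ∈ F) ∧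
    (∀ x y : L, x ∈ F → y ∈ F → meet x y ∈ F)

/-- A prime lattice filter: a proper lattice filter such that
`x ∨ y ∈ F` implies `x ∈ F` or `y ∈ F`. -/
def IsPrimeFilter (F : Set L) : Prop :=
  IsLatticeFilter F ∧ F ≠ Set.univ ∧ ∀ x y : L, join x y ∈ F → x ∈ F ∨ y ∈ F

/-- `F ⊸ G = {z | ∀ a ∉ G, z → a ∉ F}` (intended for `F ⊆ G`). -/
def lolli (F G : Set L) : Set L := {z | ∀ a ∉ G, imp z a ∉ F}

/-- The general `F ⊸ G = (F ∩ G) ⊸ G`. -/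
def lolli' (F G : Set L) : Set L := lolli (F ∩ G) G

/-- The kernel `K(F) = {z | ∀ a ∉ F, z → a ∉ F}`. -/
def ker (F : Set L) : Set L := {z | ∀ a ∉ F, imp z a ∉ F}

/-- `F⁺ = {z | ¬z ∉ F}`. -/
def plus (F : Set L) : Set L := {z | neg z ∉ F}

/-- An implication filter: contains `1` and is closed under modus ponens. -/
def IsImplicationFilter (P : Set L) : Prop :=
  (one : L) ∈ P ∧ ∀ x y : L, x ∈ P → imp x y ∈ P → y ∈ P

/-- `x ~_P y` iff `x → y ∈ P` and `y → x ∈ P`. -/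
def simP (P : Set L) (x y : L) : Prop := imp x y ∈ P ∧ imp y x ∈ P

/-- `J_u(F, P) = {z | ∃ f ∈ F, z ~_P f}`. -/
def Ju (F P : Set L) : Set L := {z | ∃ f ∈ F, simP P z f}

/-- `J_d(F, P) = (J_u(F⁺, P))⁺`. -/
def Jd (F P : Set L) : Set L := plus (Ju (plus F) P)

end MV

open MV

/-
The two sides are exchanged by `a ↦ ¬(z → a) = z ⊗ ¬a`. The residuation inequalities
`a ≤ z → (z ⊗ a)` and `z ⊗ (z → a) ≤ a`, together with upward closure, then turn a witness
against membership of `z` in one side into a witness against the other.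
-/

namespace MV

variable {L : Type*} [MV L]

theorem add_one (x : L) : add x one = one :=
  add_neg_zero x

theorem neg_add_self (x : L) : add (neg x) x = one := by
  have h := luk x (one : L)
  rw [add_one, one, MV.neg_neg, add_comm zero, add_zero] at h
  exact h.symm

theorem neg_imp (z a : L) : neg (imp z a) = otimes z (neg a) := by
  rw [otimes, MV.neg_neg, imp]

theorem le_imp_otimes (z a : L) : le a (imp z (otimes z a)) := by
  unfold le imp otimes
  rw [← add_assoc, add_comm (neg a) (neg z), add_comm]
  exact neg_add_self _

theorem otimes_imp_le (z a : L) : le (otimes z (imp z a)) a := by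
  unfold le imp otimes
  rw [MV.neg_neg, add_assoc, luk z a, ← add_assoc, add_comm (neg z), add_assoc,
    neg_add_self, add_one]

variable {F G : Set L}

theorem lolli_subset_lolli_plus (hF : ∀ x y : L, x ∈ F → le x y → y ∈ F) :
    lolli F G ⊆ lolli (plus G) (plus F) := by
  intro z hz a ha hza
  have hnaF : neg a ∈ F := not_not.mp ha
  have hG : otimes z (neg a) ∈ G := by
    by_contra hG
    exact hz _ hG (hF _ _ hnaF (le_imp_otimes z (neg a)))
  exact hza (neg_imp z a ▸ hG)

theorem lolli_plus_subset_lolli (hG : ∀ x y : L, x ∈ G → le x y → y ∈ G) :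
    lolli (plus G) (plus F) ⊆ lolli F G := by
  intro z hz a haG hzaF
  have hnot : neg (imp z a) ∉ plus F := fun h => h ((MV.neg_neg (imp z a)).symm ▸ hzaF)
  have hmp : otimes z (imp z a) ∈ G := not_not.mp (hz _ hnot)
  exact haG (hG _ _ hmp (otimes_imp_le z a))

end MV

open MV

theorem stmt_5_general {L : Type*} [MV L] (F G : Set L)
    (hF : IsLatticeFilter F) (hG : IsLatticeFilter G) :
    lolli F G = lolli (plus G) (plus F) :=
  (lolli_subset_lolli_plus hF.2.1).antisymm (lolli_plus_subset_lolli hG.2.1)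

/-- For lattice filters `F ⊆ G`, `F ⊸ G = G⁺ ⊸ F⁺`. -/
theorem stmt_5 {L : Type*} [MV L] (F G : Set L)
    (hF : IsLatticeFilter F) (hG : IsLatticeFilter G) (hFG : F ⊆ G) :
    lolli F G = lolli (plus G) (plus F) :=
  stmt_5_general F G hF hG
end

section
/- Let F, H, G be lattice filters of an MV-algebra L with F ⊆ G and H ⊆ G. Then F ⊆ H ⊸ G if and only if H ⊆ F ⊸ G. -/
open MV

namespace MV

variable {L : Type*} [MV L]

theorem zero_add (x : L) : add zero x = x := by
  rw [add_comm, add_zero]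

theorem neg_one : neg (one : L) = zero :=
  neg_neg zero

theorem imp_self (x : L) : imp x x = one := by
  have h := luk x one
  rw [add_one, neg_one, zero_add] at h
  exact h.symm

theorem le_join_left (x y : L) : le x (join x y) := by
  show add (neg x) (add (neg (add (neg x) y)) y) = one
  rw [← add_assoc, add_comm (neg x), add_assoc]
  exact imp_self _

theorem IsLatticeFilter.mem_of_le {F : Set L} (hF : IsLatticeFilter F) {x y : L}
    (hx : x ∈ F) (hxy : le x y) : y ∈ F :=
  hF.2.1 x y hx hxy

/-- For `h ∈ H` and `a ∉ G`, `h → a ∈ F` is impossible: `F ⊆ H ⊸ G` would then exclude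
`(h → a) → a = h ∨ a` from `H`, yet it lies above `h`. -/
theorem subset_lolli_swap {F H G : Set L} (hH : IsLatticeFilter H)
    (hFH : F ⊆ lolli H G) : H ⊆ lolli F G :=
  fun h hh a haG hha => hFH hha a haG (hH.mem_of_le hh (le_join_left h a))

end MV

theorem stmt_7_general {L : Type*} [MV L] (F H G : Set L)
    (hF : IsLatticeFilter F) (hH : IsLatticeFilter H) :
    F ⊆ lolli H G ↔ H ⊆ lolli F G :=
  ⟨subset_lolli_swap hH, subset_lolli_swap hF⟩

/-- For lattice filters `F, H ⊆ G`,
`F ⊆ H ⊸ G` iff `H ⊆ F ⊸ G`. -/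
theorem stmt_7 {L : Type*} [MV L] (F H G : Set L)
    (hF : IsLatticeFilter F) (hH : IsLatticeFilter H) (hG : IsLatticeFilter G)
    (hFG : F ⊆ G) (hHG : H ⊆ G) :
    F ⊆ lolli H G ↔ H ⊆ lolli F G :=
  stmt_7_general F H G hF hH
end
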